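/- For all t > 0, x > 0, h > 0, the quantity J(t,x,h) := ∫₀^t √s [ (1−e^{−x²/s})/x² + (1−e^{−(x+h)²/s})/(x+h)² − 2 e^{−h²/(4s)} (1−e^{−x(x+h)/s})/(x(x+h)) ] ds satisfies J(t,x,h) ≤ 4h + Γ(1/2) x(x+h)/h. -/

import Mathlib

/-! Write `φ u = (1 - e^{-u}) / u`, `a = x²/s`, `b = (x+h)²/s`, `c = x(x+h)/s` and
`E = e^{-h²/(4s)}`. The integrand is `s^{-1/2} ((1 - E)(φ a + φ b) + E (φ a + φ b - 2 φ c))`.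
From `φ u = ∫₀¹ e^{-uv} dv`, `φ` takes values in `[0, 1]` on `[0, ∞)`, is decreasing and
`1/2`-Lipschitz, so `φ a + φ b - 2 φ c ≤ φ a - φ c ≤ (c - a)/2 = xh/(2s)`. Together with
`1 - E ≤ min 1 (h²/(4s))`, the integrand is at most
`2 min(s^{-1/2}, (h²/4) s^{-3/2}) + (xh/2) E s^{-3/2}`, whose integral over `(0, ∞)` is at most
`4h + Γ(1/2) x` (the second part after `s ↦ 1/s` is a Gamma integral), and `x ≤ x(x+h)/h`. -/

open MeasureTheory Real

noncomputable def J (t x h : ℝ) : ℝ :=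
  ∫ s in Set.Ioc (0:ℝ) t, Real.sqrt s *
    ((1 - Real.exp (-x ^ 2 / s)) / x ^ 2 +
     (1 - Real.exp (-(x + h) ^ 2 / s)) / (x + h) ^ 2 -
     2 * Real.exp (-h ^ 2 / (4 * s)) * (1 - Real.exp (-(x * (x + h)) / s)) / (x * (x + h)))

open Set

noncomputable def oneSubExpNegDiv (u : ℝ) : ℝ := (1 - exp (-u)) / u

lemma one_sub_exp_neg_div_div {y s : ℝ} (hs : s ≠ 0) :
    (1 - exp (-y / s)) / y = oneSubExpNegDiv (y / s) / s := by
  rw [oneSubExpNegDiv, neg_div, div_div, div_mul_cancel₀ _ hs]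

namespace oneSubExpNegDiv

lemma eq_integral {u : ℝ} (hu : u ≠ 0) :
    oneSubExpNegDiv u = ∫ v in (0 : ℝ)..1, exp (-u * v) := by
  rw [intervalIntegral.integral_comp_mul_left (fun v => exp v) (neg_ne_zero.2 hu), integral_exp,
    oneSubExpNegDiv]
  simp only [mul_zero, mul_one, exp_zero, smul_eq_mul]
  field_simp
  ring

lemma intervalIntegrable_exp_mul (u : ℝ) :
    IntervalIntegrable (fun v => exp (-u * v)) volume 0 1 :=
  (by fun_prop : Continuous fun v => exp (-u * v)).intervalIntegrable 0 1

lemma nonneg (u : ℝ) : 0 ≤ oneSubExpNegDiv u := by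
  rcases eq_or_ne u 0 with rfl | hu
  · simp [oneSubExpNegDiv]
  · rw [eq_integral hu]
    exact intervalIntegral.integral_nonneg zero_le_one fun v _ => (exp_pos _).le

lemma le_one {u : ℝ} (hu : 0 ≤ u) : oneSubExpNegDiv u ≤ 1 := by
  rcases hu.eq_or_lt with rfl | hu
  · simp [oneSubExpNegDiv]
  · rw [oneSubExpNegDiv, div_le_one hu]
    linarith [add_one_le_exp (-u)]

lemma antitoneOn : AntitoneOn oneSubExpNegDiv (Ioi 0) := by
  intro c hc b hb hcb
  rw [eq_integral (ne_of_gt hc), eq_integral (ne_of_gt hb)]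
  refine intervalIntegral.integral_mono_on zero_le_one (intervalIntegrable_exp_mul b)
    (intervalIntegrable_exp_mul c) fun v hv => exp_le_exp.2 ?_
  nlinarith [hv.1]

lemma sub_le {a c : ℝ} (ha : 0 < a) (hac : a ≤ c) :
    oneSubExpNegDiv a - oneSubExpNegDiv c ≤ (c - a) / 2 := by
  rw [eq_integral ha.ne', eq_integral (ha.trans_le hac).ne',
    ← intervalIntegral.integral_sub (intervalIntegrable_exp_mul a) (intervalIntegrable_exp_mul c)]
  calc (∫ v in (0 : ℝ)..1, exp (-a * v) - exp (-c * v))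
      ≤ ∫ v in (0 : ℝ)..1, (c - a) * v := by
        refine intervalIntegral.integral_mono_on zero_le_one
          ((intervalIntegrable_exp_mul a).sub (intervalIntegrable_exp_mul c))
          ((by fun_prop : Continuous fun v : ℝ => (c - a) * v).intervalIntegrable 0 1)
          fun v hv => ?_
        have hfactor :
            exp (-a * v) - exp (-c * v) = exp (-a * v) * (1 - exp (-((c - a) * v))) := by
          rw [mul_sub, mul_one, ← exp_add]; ring_nf
        have hexp_le : exp (-a * v) ≤ 1 := exp_le_one_iff.2 (by nlinarith [hv.1])
        have hgap : 0 ≤ 1 - exp (-((c - a) * v)) := by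
          linarith [exp_le_one_iff.2 (by nlinarith [hv.1] : -((c - a) * v) ≤ 0)]
        rw [hfactor]
        nlinarith [add_one_le_exp (-((c - a) * v))]
    _ = (c - a) / 2 := by
        rw [intervalIntegral.integral_const_mul, integral_id]; ring

lemma add_sub_two_mul_le {a b c : ℝ} (ha : 0 < a) (hac : a ≤ c) (hcb : c ≤ b) :
    oneSubExpNegDiv a + oneSubExpNegDiv b - 2 * oneSubExpNegDiv c ≤ (c - a) / 2 := by
  have hc : 0 < c := ha.trans_le hac
  linarith [sub_le ha hac, antitoneOn (mem_Ioi.2 hc) (mem_Ioi.2 (hc.trans_le hcb)) hcb]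

end oneSubExpNegDiv

-- The integrand shape of `integral_comp_rpow_Ioi` for the substitution `s ↦ s⁻¹`.
lemma exp_neg_div_mul_rpow_eq_comp_rpow_neg_one {b s : ℝ} (hs : 0 < s) :
    exp (-b / s) * s ^ (-(3 / 2) : ℝ) = (|(-1 : ℝ)| * s ^ ((-1 : ℝ) - 1)) •
      ((s ^ (-1 : ℝ)) ^ (-(1 / 2) : ℝ) * exp (-b * s ^ (-1 : ℝ))) := by
  have hpow : s ^ ((-1 : ℝ) - 1) * s ^ ((-1 : ℝ) * -(1 / 2)) = s ^ (-(3 / 2) : ℝ) := by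
    rw [← rpow_add hs]; norm_num
  rw [smul_eq_mul, abs_neg, abs_one, one_mul, ← rpow_mul hs.le, rpow_neg_one, ← div_eq_mul_inv,
    ← hpow]
  ring

lemma integrableOn_exp_neg_div_mul_rpow {b : ℝ} (hb : 0 < b) :
    IntegrableOn (fun s => exp (-b / s) * s ^ (-(3 / 2) : ℝ)) (Ioi 0) := by
  have hGamma : IntegrableOn (fun u : ℝ => u ^ (-(1 / 2) : ℝ) * exp (-b * u)) (Ioi 0) := by
    simpa only [rpow_one] using
      integrableOn_rpow_mul_exp_neg_mul_rpow (p := 1) (by norm_num) one_pos hb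
  rw [← integrableOn_Ioi_comp_rpow_iff _ (p := -1) (by norm_num)] at hGamma
  exact hGamma.congr_fun (fun s hs => (exp_neg_div_mul_rpow_eq_comp_rpow_neg_one hs).symm)
    measurableSet_Ioi

lemma integral_exp_neg_div_mul_rpow {b : ℝ} (hb : 0 < b) :
    ∫ s in Ioi 0, exp (-b / s) * s ^ (-(3 / 2) : ℝ) = Gamma (1 / 2) / √b := by
  have hGamma := integral_rpow_mul_exp_neg_mul_rpow (p := 1) (q := -(1 / 2)) one_pos
    (by norm_num) hb
  simp only [rpow_one] at hGamma
  rw [setIntegral_congr_fun measurableSet_Ioi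
      fun s hs => exp_neg_div_mul_rpow_eq_comp_rpow_neg_one hs,
    integral_comp_rpow_Ioi (fun u => u ^ (-(1 / 2) : ℝ) * exp (-b * u)) (by norm_num), hGamma,
    sqrt_eq_rpow]
  norm_num [rpow_neg hb.le]
  ring

lemma integrableOn_Ioc_rpow_neg_half (T : ℝ) :
    IntegrableOn (fun s : ℝ => s ^ (-(1 / 2) : ℝ)) (Ioc 0 T) := by
  rcases le_total 0 T with hT | hT
  · exact (intervalIntegrable_iff_integrableOn_Ioc_of_le hT).1
      (intervalIntegral.intervalIntegrable_rpow' (by norm_num))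
  · simp [Ioc_eq_empty_of_le hT]

lemma integral_Ioc_rpow_neg_half {T : ℝ} (hT : 0 ≤ T) :
    ∫ s in Ioc 0 T, s ^ (-(1 / 2) : ℝ) = 2 * √T := by
  rw [← intervalIntegral.integral_of_le hT, integral_rpow (Or.inl (by norm_num)), sqrt_eq_rpow]
  norm_num
  ring

lemma integral_Ioi_mul_rpow_neg_three_halves {T : ℝ} (hT : 0 < T) :
    ∫ s in Ioi T, T * s ^ (-(3 / 2) : ℝ) = 2 * √T := by
  rw [integral_const_mul, integral_Ioi_rpow_of_lt (by norm_num) hT, sqrt_eq_rpow]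
  have : T * T ^ (-(1 / 2) : ℝ) = T ^ (1 / 2 : ℝ) := by
    rw [← rpow_one_add' hT.le (by norm_num)]; norm_num
  norm_num
  linear_combination 2 * this

lemma integrableOn_min_rpow {T : ℝ} (hT : 0 < T) :
    IntegrableOn (fun s => min (s ^ (-(1 / 2) : ℝ)) (T * s ^ (-(3 / 2) : ℝ))) (Ioi 0) := by
  have hmeas : Measurable fun s : ℝ => min (s ^ (-(1 / 2) : ℝ)) (T * s ^ (-(3 / 2) : ℝ)) := by
    fun_prop
  rw [← Ioc_union_Ioi_eq_Ioi hT.le]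
  refine IntegrableOn.union ?_ ?_
  · refine (integrableOn_Ioc_rpow_neg_half T).mono' hmeas.aestronglyMeasurable ?_
    filter_upwards [ae_restrict_mem measurableSet_Ioc] with s hs
    rw [norm_of_nonneg (by have := hs.1; positivity)]
    exact min_le_left _ _
  · refine ((integrableOn_Ioi_rpow_of_lt (a := -(3 / 2)) (by norm_num) hT).const_mul T).mono'
      hmeas.aestronglyMeasurable ?_
    filter_upwards [ae_restrict_mem measurableSet_Ioi] with s hs
    rw [norm_of_nonneg (by have := hT.trans hs; positivity)]
    exact min_le_right _ _

lemma integral_min_rpow_le {T : ℝ} (hT : 0 < T) :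
    ∫ s in Ioi 0, min (s ^ (-(1 / 2) : ℝ)) (T * s ^ (-(3 / 2) : ℝ)) ≤ 4 * √T := by
  have hint := integrableOn_min_rpow hT
  rw [← Ioc_union_Ioi_eq_Ioi hT.le, setIntegral_union (Ioc_disjoint_Ioi le_rfl) measurableSet_Ioi
    (hint.mono_set Ioc_subset_Ioi_self) (hint.mono_set (Ioi_subset_Ioi hT.le))]
  have hsmall := setIntegral_mono_on (hint.mono_set Ioc_subset_Ioi_self)
    (integrableOn_Ioc_rpow_neg_half T) measurableSet_Ioc fun s _ => min_le_left _ _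
  have hlarge := setIntegral_mono_on (hint.mono_set (Ioi_subset_Ioi hT.le))
    ((integrableOn_Ioi_rpow_of_lt (by norm_num) hT).const_mul T) measurableSet_Ioi
    fun s _ => min_le_right _ _
  rw [integral_Ioc_rpow_neg_half hT.le] at hsmall
  rw [integral_Ioi_mul_rpow_neg_three_halves hT] at hlarge
  linarith

noncomputable def JIntegrand (x h s : ℝ) : ℝ :=
  √s * ((1 - exp (-x ^ 2 / s)) / x ^ 2 + (1 - exp (-(x + h) ^ 2 / s)) / (x + h) ^ 2 -
    2 * exp (-h ^ 2 / (4 * s)) * (1 - exp (-(x * (x + h)) / s)) / (x * (x + h)))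

lemma J_eq_integral_JIntegrand (t x h : ℝ) : J t x h = ∫ s in Ioc 0 t, JIntegrand x h s := rfl

noncomputable def JMajorant (x h s : ℝ) : ℝ :=
  2 * min (s ^ (-(1 / 2) : ℝ)) (h ^ 2 / 4 * s ^ (-(3 / 2) : ℝ)) +
    x * h / 2 * (exp (-(h ^ 2 / 4) / s) * s ^ (-(3 / 2) : ℝ))

lemma JIntegrand_eq {x h s : ℝ} (hs : 0 < s) :
    JIntegrand x h s = s ^ (-(1 / 2) : ℝ) *
      ((1 - exp (-(h ^ 2 / 4) / s)) *
          (oneSubExpNegDiv (x ^ 2 / s) + oneSubExpNegDiv ((x + h) ^ 2 / s)) +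
        exp (-(h ^ 2 / 4) / s) * (oneSubExpNegDiv (x ^ 2 / s) +
          oneSubExpNegDiv ((x + h) ^ 2 / s) - 2 * oneSubExpNegDiv (x * (x + h) / s))) := by
  have hsqrt : √s = s ^ (-(1 / 2) : ℝ) * s := by
    rw [sqrt_eq_rpow, ← rpow_add_one hs.ne']; norm_num
  have hE : exp (-h ^ 2 / (4 * s)) = exp (-(h ^ 2 / 4) / s) := by congr 1; ring
  rw [JIntegrand, hsqrt, one_sub_exp_neg_div_div hs.ne', one_sub_exp_neg_div_div hs.ne',
    mul_div_assoc, one_sub_exp_neg_div_div hs.ne', hE]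
  field_simp
  ring

lemma JIntegrand_le_JMajorant {x h s : ℝ} (hx : 0 < x) (hh : 0 < h) (hs : 0 < s) :
    JIntegrand x h s ≤ JMajorant x h s := by
  rw [JIntegrand_eq hs, JMajorant, show s ^ (-(3 / 2) : ℝ) = s ^ (-(1 / 2) : ℝ) / s by
    rw [← rpow_sub_one hs.ne']; norm_num]
  set r := s ^ (-(1 / 2) : ℝ)
  have hr : 0 ≤ r := by positivity
  set T := h ^ 2 / 4
  set E := exp (-T / s)
  have hE : 0 < E := exp_pos _
  have hET : 1 - E ≤ T / s := by linarith [add_one_le_exp (-T / s), neg_div s T]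
  set A := oneSubExpNegDiv (x ^ 2 / s)
  set B := oneSubExpNegDiv ((x + h) ^ 2 / s)
  set C := oneSubExpNegDiv (x * (x + h) / s)
  have hAB : 0 ≤ A + B := add_nonneg (oneSubExpNegDiv.nonneg _) (oneSubExpNegDiv.nonneg _)
  have hAB2 : A + B ≤ 2 := by
    linarith [oneSubExpNegDiv.le_one (u := x ^ 2 / s) (by positivity),
      oneSubExpNegDiv.le_one (u := (x + h) ^ 2 / s) (by positivity)]
  have hABC : A + B - 2 * C ≤ x * h / (2 * s) := by
    have := oneSubExpNegDiv.add_sub_two_mul_le (a := x ^ 2 / s) (b := (x + h) ^ 2 / s)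
      (c := x * (x + h) / s) (by positivity) (by gcongr; nlinarith) (by gcongr; nlinarith)
    convert this using 1; ring
  have hfirst : r * ((1 - E) * (A + B)) ≤ 2 * min r (T * (r / s)) := by
    rw [mul_min_of_nonneg _ _ zero_le_two]
    refine le_min ?_ ?_
    · nlinarith [mul_le_mul (by linarith : 1 - E ≤ 1) hAB2 hAB zero_le_one]
    · have := mul_le_mul hET hAB2 hAB (by positivity)
      have hrs : r * (T / s) = T * (r / s) := by ring
      nlinarith
  have hsecond : r * (E * (A + B - 2 * C)) ≤ x * h / 2 * (E * (r / s)) :=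
    calc r * (E * (A + B - 2 * C)) ≤ r * (E * (x * h / (2 * s))) := by gcongr
      _ = x * h / 2 * (E * (r / s)) := by ring
  rw [mul_add]
  exact add_le_add hfirst hsecond

lemma JMajorant_nonneg {x h s : ℝ} (hx : 0 ≤ x) (hh : 0 ≤ h) (hs : 0 < s) :
    0 ≤ JMajorant x h s := by
  unfold JMajorant
  positivity

lemma integrableOn_JMajorant (x : ℝ) {h : ℝ} (hh : 0 < h) :
    IntegrableOn (JMajorant x h) (Ioi 0) :=
  ((integrableOn_min_rpow (by positivity)).const_mul 2).add
    ((integrableOn_exp_neg_div_mul_rpow (by positivity)).const_mul _)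

lemma integral_JMajorant_le (x : ℝ) {h : ℝ} (hh : 0 < h) :
    ∫ s in Ioi 0, JMajorant x h s ≤ 4 * h + Gamma (1 / 2) * x := by
  have hT : 0 < h ^ 2 / 4 := by positivity
  have hsqrtT : √(h ^ 2 / 4) = h / 2 := by
    rw [show h ^ 2 / 4 = (h / 2) ^ 2 by ring, sqrt_sq (by positivity)]
  have hmin := integral_min_rpow_le hT
  rw [hsqrtT] at hmin
  unfold JMajorant
  rw [integral_add ((integrableOn_min_rpow hT).const_mul 2)
      ((integrableOn_exp_neg_div_mul_rpow hT).const_mul _), integral_const_mul, integral_const_mul,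
    integral_exp_neg_div_mul_rpow hT, hsqrtT]
  have hGamma : x * h / 2 * (Gamma (1 / 2) / (h / 2)) = Gamma (1 / 2) * x := by
    field_simp
  linarith

theorem J_first_bound_general (t x h : ℝ) (hx : 0 < x) (hh : 0 < h) :
    J t x h ≤ 4 * h + Real.Gamma (1/2) * x * (x + h) / h := by
  have hx_le : Gamma (1 / 2) * x ≤ Gamma (1 / 2) * x * ((x + h) / h) :=
    le_mul_of_one_le_right (by positivity) ((one_le_div hh).2 (by linarith))
  rw [mul_div_assoc, J_eq_integral_JIntegrand]
  by_cases hJ : IntegrableOn (JIntegrand x h) (Ioc 0 t)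
  · have hM := integrableOn_JMajorant x hh
    calc ∫ s in Ioc 0 t, JIntegrand x h s ≤ ∫ s in Ioc 0 t, JMajorant x h s :=
          setIntegral_mono_on hJ (hM.mono_set Ioc_subset_Ioi_self) measurableSet_Ioc
            fun s hs => JIntegrand_le_JMajorant hx hh hs.1
      _ ≤ ∫ s in Ioi 0, JMajorant x h s := by
          refine setIntegral_mono_set hM ?_ (.of_forall fun s hs => hs.1)
          filter_upwards [ae_restrict_mem measurableSet_Ioi] with s hs
          exact JMajorant_nonneg hx.le hh.le hs
      _ ≤ 4 * h + Gamma (1 / 2) * x := integral_JMajorant_le x hh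
      _ ≤ _ := by linarith
  · rw [integral_undef hJ]
    positivity

theorem J_first_bound (t x h : ℝ) (ht : 0 < t) (hx : 0 < x) (hh : 0 < h) :
    J t x h ≤ 4 * h + Real.Gamma (1/2) * x * (x + h) / h :=
  J_first_bound_general t x h hx hh
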